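/- Fix a mesh size h > 0. Let ρ, ν be mesh functions with ν, ρ·ν, ρ·D₊ν, ρ·D₋ν, ρ·E(D₊ν), D₊²D₋ν, ν·(D₋²D₊ρ), D₊ν, (D₀ρ)·(D₊ν), and (D₋ρ)·(D₊ν) all in L²_h (products taken pointwise), and suppose ρ(n) ≥ 0 for all n ∈ ℤ. Then (ρ·ν, D₊²D₋ν)_{L²_h} ≥ −(1/2)·(ν, ν·(D₋²D₊ρ))_{L²_h} + ((D₀ρ)·(D₊ν), D₊ν)_{L²_h} + (1/2)·((D₋ρ)·(D₊ν), D₊ν)_{L²_h}. -/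
import Mathlib

noncomputable section

open Set Filter

/-- Forward discrete derivative `D₊u(n) = (u(n+1) - u(n))/h`. -/
def Dp (h : ℝ) (u : ℤ → ℝ) : ℤ → ℝ := fun n => (u (n + 1) - u n) / h

/-- Backward discrete derivative `D₋u(n) = (u(n) - u(n-1))/h`. -/
def Dm (h : ℝ) (u : ℤ → ℝ) : ℤ → ℝ := fun n => (u n - u (n - 1)) / h

/-- Central discrete derivative `D₀u(n) = (u(n+1) - u(n-1))/(2h)`. -/
def D0 (h : ℝ) (u : ℤ → ℝ) : ℤ → ℝ := fun n => (u (n + 1) - u (n - 1)) / (2 * h)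

/-- Shift operator `Eu(n) = u(n+1)`. -/
def Esh (u : ℤ → ℝ) : ℤ → ℝ := fun n => u (n + 1)

/-- Membership in `L²_h`: square-summability of the mesh function. -/
def MemL2 (u : ℤ → ℝ) : Prop := Summable fun n : ℤ => (u n) ^ 2

/-- The discrete inner product `(u,v)_{L²_h} = Σₙ u(n)·v(n)·h`. -/
def ip2 (h : ℝ) (u v : ℤ → ℝ) : ℝ := ∑' n : ℤ, u n * v n * h

/-- The discrete `L²_h` norm. -/
def nrm (h : ℝ) (u : ℤ → ℝ) : ℝ := Real.sqrt (∑' n : ℤ, (u n) ^ 2 * h)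

/-- The mesh weight `⟨x⟩ = √(x² + 1)` evaluated at the mesh point `x = n·h`. -/
def jp (h : ℝ) (n : ℤ) : ℝ := Real.sqrt (((n : ℝ) * h) ^ 2 + 1)

lemma summable_mul_of_memL2 {u v : ℤ → ℝ} (hu : MemL2 u) (hv : MemL2 v) :
    Summable fun n => u n * v n := by
  have habs : Summable fun n => |u n * v n| := by
    apply Summable.of_nonneg_of_le (fun n => abs_nonneg _)
      (fun n => ?_) ((hu.add hv).mul_left (1/2))
    rw [abs_mul]
    nlinarith [abs_nonneg (u n), abs_nonneg (v n), sq_abs (u n), sq_abs (v n),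
      sq_nonneg (|u n| - |v n|)]
  exact habs.of_abs

lemma memL2_shift {u : ℤ → ℝ} (k : ℤ) (hu : MemL2 u) :
    MemL2 fun n => u (n + k) :=
  ((Equiv.addRight k).summable_iff (f := fun n : ℤ => u n ^ 2)).2 hu

lemma memL2_shift_sub {u : ℤ → ℝ} (k : ℤ) (hu : MemL2 u) :
    MemL2 fun n => u (n - k) :=
  (memL2_shift (-k) hu).congr fun n => by simp [sub_eq_add_neg]

lemma summable_shift {f : ℤ → ℝ} (hf : Summable f) : Summable fun n => f (n + 1) :=
  ((Equiv.addRight (1:ℤ)).summable_iff (f := f)).2 hf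

lemma tsum_shift_eq (f : ℤ → ℝ) : ∑' n : ℤ, f (n + 1) = ∑' n : ℤ, f n :=
  (Equiv.addRight (1:ℤ)).tsum_eq f

lemma tsum_telescope_zero {G : ℤ → ℝ} (hG : Summable G) :
    ∑' n : ℤ, (G (n + 1) - G n) = 0 := by
  rw [Summable.tsum_sub (summable_shift hG) hG, tsum_shift_eq, sub_self]

/-- The telescoping correction function appearing in the discrete summation by parts. -/
def auxG (h : ℝ) (ρ ν : ℤ → ℝ) : ℤ → ℝ := fun n => (1/h^2) * (
      (1/2) * (ρ (n-2) * ν (n-2) * ν n)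
      + (h/2) * (ρ (n-2) * Dp h ν (n-2) * ν n)
      + (h/2) * (ρ (n-2) * Esh (Dp h ν) (n-2) * ν n)
      - (5/2) * (ρ (n-1) * ν (n-1) * ν n)
      - (5*h/2) * (ρ (n-1) * Dp h ν (n-1) * ν n)
      + 2 * (ρ (n-1) * ν (n-1) * ν n)
      + (2*h) * (ρ (n-1) * Dp h ν (n-1) * ν n)
      + (2*h) * (ρ (n-1) * Esh (Dp h ν) (n-1) * ν n)
      - (1/2) * (ρ (n-1) * ν (n-1) * ν (n+1))
      - (h/2) * (ρ (n-1) * Dp h ν (n-1) * ν (n+1))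
      - (h/2) * (ρ (n-1) * Esh (Dp h ν) (n-1) * ν (n+1))
      + ρ n * ν n * ν n
      - h * (ρ n * Dm h ν n * ν n)
      - (1/2) * (ρ n * ν n * ν n))

set_option maxHeartbeats 1600000 in
/-- The pointwise summation-by-parts identity. -/
lemma aux_key (h : ℝ) (hne : h ≠ 0) (ρ ν : ℤ → ℝ) (n : ℤ) :
    ρ n * ν n * Dp h (Dp h (Dm h ν)) n * h
      = (-(1/2) * (ν n * (ν n * Dm h (Dm h (Dp h ρ)) n) * h)
          + D0 h ρ n * Dp h ν n * Dp h ν n * h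
          + (1/2) * (Dm h ρ n * Dp h ν n * Dp h ν n * h)
          + (1/2) * (ρ n * (Esh (Dp h ν) n - Dp h ν n) ^ 2))
        + (auxG h ρ ν (n+1) - auxG h ρ ν n) := by
  simp only [auxG, Dp, Dm, D0, Esh,
    show ∀ m : ℤ, m + 1 + 1 = m + 2 from fun m => by ring,
    show ∀ m : ℤ, m + 1 - 1 = m from fun m => by ring,
    show ∀ m : ℤ, m - 1 + 1 = m from fun m => by ring,
    show ∀ m : ℤ, m - 1 - 1 = m - 2 from fun m => by ring,
    show ∀ m : ℤ, m - 2 + 1 = m - 1 from fun m => by ring,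
    show ∀ m : ℤ, m + 2 - 1 = m + 1 from fun m => by ring,
    show ∀ m : ℤ, m + 1 - 2 = m - 1 from fun m => by ring]
  field_simp
  ring

/-- **Proposition 2.1 (4).**  With the stated square-summability hypotheses and `ρ ≥ 0`,
`(ρν, D₊²D₋ν) ≥ -½ (ν, ν·D₋²D₊ρ) + ((D₀ρ)(D₊ν), D₊ν) + ½ ((D₋ρ)(D₊ν), D₊ν)`. -/
theorem discrete_DppDm_inner_lower_bound
    (h : ℝ) (hh : 0 < h) (ρ ν : ℤ → ℝ)
    (h1 : MemL2 ν)
    (h2 : MemL2 (fun n => ρ n * ν n))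
    (h3 : MemL2 (fun n => ρ n * Dp h ν n))
    (h4 : MemL2 (fun n => ρ n * Dm h ν n))
    (h5 : MemL2 (fun n => ρ n * Esh (Dp h ν) n))
    (h6 : MemL2 (Dp h (Dp h (Dm h ν))))
    (h7 : MemL2 (fun n => ν n * Dm h (Dm h (Dp h ρ)) n))
    (h8 : MemL2 (Dp h ν))
    (h9 : MemL2 (fun n => D0 h ρ n * Dp h ν n))
    (h10 : MemL2 (fun n => Dm h ρ n * Dp h ν n))
    (hρpos : ∀ n : ℤ, 0 ≤ ρ n) :
    ip2 h (fun n => ρ n * ν n) (Dp h (Dp h (Dm h ν)))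
      ≥ -(1 / 2) * ip2 h ν (fun n => ν n * Dm h (Dm h (Dp h ρ)) n)
        + ip2 h (fun n => D0 h ρ n * Dp h ν n) (Dp h ν)
        + (1 / 2) * ip2 h (fun n => Dm h ρ n * Dp h ν n) (Dp h ν) := by
  have hne : h ≠ 0 := hh.ne'
  -- summand functions
  let a : ℤ → ℝ := fun n => ρ n * ν n * Dp h (Dp h (Dm h ν)) n * h
  let b1 : ℤ → ℝ := fun n => ν n * (ν n * Dm h (Dm h (Dp h ρ)) n) * h
  let b2 : ℤ → ℝ := fun n => D0 h ρ n * Dp h ν n * Dp h ν n * h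
  let b3 : ℤ → ℝ := fun n => Dm h ρ n * Dp h ν n * Dp h ν n * h
  let c : ℤ → ℝ := fun n => (1/2) * (ρ n * (Esh (Dp h ν) n - Dp h ν n) ^ 2)
  -- summability facts
  have Sa : Summable a := (summable_mul_of_memL2 h2 h6).mul_right h
  have Sb1 : Summable b1 := (summable_mul_of_memL2 h1 h7).mul_right h
  have Sb2 : Summable b2 := (summable_mul_of_memL2 h9 h8).mul_right h
  have Sb3 : Summable b3 := (summable_mul_of_memL2 h10 h8).mul_right h
  have Sc : Summable c := by
    have s1 := summable_mul_of_memL2 h5 (memL2_shift 1 h8)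
    have s2 := summable_mul_of_memL2 h5 h8
    have s3 := summable_mul_of_memL2 h3 (memL2_shift 1 h8)
    have s4 := summable_mul_of_memL2 h3 h8
    refine ((((s1.sub s2).sub s3).add s4).mul_left (1/2)).congr fun n => ?_
    show (1/2) * (ρ n * Esh (Dp h ν) n * Dp h ν (n+1) - ρ n * Esh (Dp h ν) n * Dp h ν n
      - ρ n * Dp h ν n * Dp h ν (n+1) + ρ n * Dp h ν n * Dp h ν n)
      = (1/2) * (ρ n * (Esh (Dp h ν) n - Dp h ν n) ^ 2)
    simp only [Esh]
    ring
  have SG : Summable (auxG h ρ ν) := by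
    have t1 := summable_mul_of_memL2 (memL2_shift_sub 2 h2) h1
    have t2 := summable_mul_of_memL2 (memL2_shift_sub 2 h3) h1
    have t3 := summable_mul_of_memL2 (memL2_shift_sub 2 h5) h1
    have t4 := summable_mul_of_memL2 (memL2_shift_sub 1 h2) h1
    have t5 := summable_mul_of_memL2 (memL2_shift_sub 1 h3) h1
    have t6 := summable_mul_of_memL2 (memL2_shift_sub 1 h5) h1
    have t7 := summable_mul_of_memL2 (memL2_shift_sub 1 h2) (memL2_shift 1 h1)
    have t8 := summable_mul_of_memL2 (memL2_shift_sub 1 h3) (memL2_shift 1 h1)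
    have t9 := summable_mul_of_memL2 (memL2_shift_sub 1 h5) (memL2_shift 1 h1)
    have t10 := summable_mul_of_memL2 h2 h1
    have t11 := summable_mul_of_memL2 h4 h1
    exact (((((((((((((((t1.mul_left (1/2)).add (t2.mul_left (h/2))).add
      (t3.mul_left (h/2))).sub (t4.mul_left (5/2))).sub (t5.mul_left (5*h/2))).add
      (t4.mul_left 2)).add (t5.mul_left (2*h))).add (t6.mul_left (2*h))).sub
      (t7.mul_left (1/2))).sub (t8.mul_left (h/2))).sub (t9.mul_left (h/2))).add
      t10).sub (t11.mul_left h)).sub (t10.mul_left (1/2))).mul_left (1/h^2))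
  have SΔG : Summable fun n => auxG h ρ ν (n+1) - auxG h ρ ν n :=
    (summable_shift SG).sub SG
  have Sbc : Summable fun n => -(1/2) * b1 n + b2 n + (1/2) * b3 n + c n :=
    (((Sb1.mul_left (-(1/2))).add Sb2).add (Sb3.mul_left (1/2))).add Sc
  have hsum : ∑' n, a n = ∑' n, (-(1/2) * b1 n + b2 n + (1/2) * b3 n + c n) := by
    calc ∑' n, a n
        = ∑' n, ((-(1/2) * b1 n + b2 n + (1/2) * b3 n + c n)
            + (auxG h ρ ν (n+1) - auxG h ρ ν n)) :=
          tsum_congr fun n => aux_key h hne ρ ν n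
      _ = ∑' n, (-(1/2) * b1 n + b2 n + (1/2) * b3 n + c n)
            + ∑' n, (auxG h ρ ν (n+1) - auxG h ρ ν n) := Summable.tsum_add Sbc SΔG
      _ = ∑' n, (-(1/2) * b1 n + b2 n + (1/2) * b3 n + c n) := by
          rw [tsum_telescope_zero SG, add_zero]
  have hsplit : ∑' n, (-(1/2) * b1 n + b2 n + (1/2) * b3 n + c n)
      = (-(1/2) * ∑' n, b1 n + ∑' n, b2 n + (1/2) * ∑' n, b3 n) + ∑' n, c n := by
    rw [Summable.tsum_add (((Sb1.mul_left (-(1/2))).add Sb2).add (Sb3.mul_left (1/2))) Sc,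
      Summable.tsum_add ((Sb1.mul_left (-(1/2))).add Sb2) (Sb3.mul_left (1/2)),
      Summable.tsum_add (Sb1.mul_left (-(1/2))) Sb2, tsum_mul_left, tsum_mul_left]
  have hcpos : 0 ≤ ∑' n, c n :=
    tsum_nonneg fun n => mul_nonneg (by norm_num) (mul_nonneg (hρpos n) (sq_nonneg _))
  have hLHS : ip2 h (fun n => ρ n * ν n) (Dp h (Dp h (Dm h ν))) = ∑' n, a n := rfl
  have hR1 : ip2 h ν (fun n => ν n * Dm h (Dm h (Dp h ρ)) n) = ∑' n, b1 n := rfl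
  have hR2 : ip2 h (fun n => D0 h ρ n * Dp h ν n) (Dp h ν) = ∑' n, b2 n := rfl
  have hR3 : ip2 h (fun n => Dm h ρ n * Dp h ν n) (Dp h ν) = ∑' n, b3 n := rfl
  rw [hLHS, hR1, hR2, hR3, hsum, hsplit]
  have h12 : -(1/2 : ℝ) = -(1/2 : ℝ) := rfl
  linarith
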